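/- arXiv:1402.1979 — 8 statements merged into one kernel-verified Lean document; each statement's English description precedes it below -/
import Mathlib

section
/- For every positive even integer n, the derivative f'(x) of f(x) = x + 1/4 - (x/2 + 1/4)·cos(πx) satisfies f'(n - 1/(π²n)) < 0. -/
noncomputable def f (x : ℝ) : ℝ := x + 1/4 - (x/2 + 1/4) * Real.cos (Real.pi * x)

/-! At `x = n - 1 / (π² n)` with `n` even, put `t = 1 / (π n)`, so that `π x = n π - t`. Then
`f' x = 1 - cos t / 2 - (1 / (2 t) - t / 2 + π / 4) sin t`, and the Taylor bounds
`cos t ≥ 1 - t² / 2`, `sin t > t - t³ / 6` reduce its negativity to a polynomial inequality in the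
small quantity `t`. -/

open Real

lemma hasDerivAt_f (x : ℝ) :
    HasDerivAt f (1 - cos (π * x) / 2 + π * (x / 2 + 1 / 4) * sin (π * x)) x := by
  have hcos : HasDerivAt (fun y => cos (π * y)) (-sin (π * x) * π) x := by
    simpa [mul_comm] using ((hasDerivAt_id x).const_mul π).cos
  unfold f
  exact (((hasDerivAt_id' x).add_const (1 / 4 : ℝ)).sub
    ((((hasDerivAt_id' x).div_const 2).add_const (1 / 4 : ℝ)).mul hcos)).congr_deriv (by ring)

lemma deriv_f_even_sub_div_pi {n : ℕ} (hn : Even n) (t : ℝ) :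
    deriv f (n - t / π) = 1 - cos t / 2 - (π * n / 2 - t / 2 + π / 4) * sin t := by
  have hx : π * (n - t / π) = n * π - t := by field_simp
  rw [(hasDerivAt_f _).deriv, hx, cos_nat_mul_pi_sub, sin_nat_mul_pi_sub, hn.neg_one_pow]
  field_simp
  ring

lemma one_sub_half_cos_lt {t : ℝ} (ht₀ : 0 < t) (ht : t ≤ 1 / 2) :
    1 - cos t / 2 < (1 / (2 * t) - t / 2 + π / 4) * sin t := by
  have hcos : 1 - t ^ 2 / 2 ≤ cos t := one_sub_sq_div_two_le_cos
  have hsin : t - t ^ 3 / 6 < sin t := sin_gt_sub_cube ht₀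
  have hcoef : 0 < 1 / (2 * t) - t / 2 + π / 4 := by
    have : t / 2 ≤ 1 / (2 * t) := by
      rw [le_div_iff₀ (by positivity)]; nlinarith
    linarith [pi_pos]
  have hpoly : (1 / (2 * t) - t / 2 + π / 4) * (t - t ^ 3 / 6) =
      1 / 2 + t ^ 2 / 4 + t * (π / 4 * (1 - t ^ 2 / 6) + t ^ 3 / 12 - 5 * t / 6) := by
    field_simp; ring
  have hsmall : 0 < π / 4 * (1 - t ^ 2 / 6) + t ^ 3 / 12 - 5 * t / 6 := by
    have h : 0 ≤ 1 - t ^ 2 / 6 := by nlinarith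
    nlinarith [mul_le_mul_of_nonneg_right pi_gt_three.le h]
  calc 1 - cos t / 2 ≤ 1 / 2 + t ^ 2 / 4 := by linarith
    _ < (1 / (2 * t) - t / 2 + π / 4) * (t - t ^ 3 / 6) := by
        rw [hpoly]; linarith [mul_pos ht₀ hsmall]
    _ < (1 / (2 * t) - t / 2 + π / 4) * sin t := mul_lt_mul_of_pos_left hsin hcoef

theorem stmt_0 (n : ℕ) (hn : 0 < n) (he : Even n) :
    deriv f ((n : ℝ) - 1 / (Real.pi ^ 2 * n)) < 0 := by
  have hn₀ : (0 : ℝ) < n := by exact_mod_cast hn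
  set t : ℝ := 1 / (π * n) with ht
  have hpoint : (n : ℝ) - 1 / (π ^ 2 * n) = n - t / π := by
    rw [ht]; field_simp
  have hhalf : π * n / 2 = 1 / (2 * t) := by
    rw [ht]; field_simp
  have ht_le : t ≤ 1 / 2 := by
    have h2 : 2 ≤ n := by obtain ⟨k, rfl⟩ := he; omega
    have : (2 : ℝ) ≤ n := by exact_mod_cast h2
    rw [ht, div_le_div_iff₀ (by positivity) two_pos]
    nlinarith [pi_gt_three]
  rw [hpoint, deriv_f_even_sub_div_pi he, hhalf]
  linarith [one_sub_half_cos_lt (by positivity : 0 < t) ht_le]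
end

section
/- For every positive odd integer n, the derivative f'(x) of f(x) = x + 1/4 - (x/2 + 1/4)·cos(πx) satisfies f'(n + 3/(π²n)) < 0. -/
/-! With `t = 3 / (π n)` ∈ (0, 1] and `n` odd, `π x = n π + t`, so
`f' x = 1 + cos t / 2 - π (x / 2 + 1 / 4) sin t`, and `π (x / 2 + 1 / 4) ≥ 3 / (2 t) + π / 4`.
The Taylor bounds `cos t ≤ 1 - t² / 2 + 5 t⁴ / 96` and `sin t > t - t³ / 6` then give
`1 + cos t / 2 < (3 / (2 t) + π / 4) sin t`: the constant `3` in `x` is exactly what makes the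
`1` and `t²` terms cancel, and `(π / 4) sin t` absorbs the quartic remainder. -/

open Real

lemma deriv_f_odd_add (n : ℕ) (ho : Odd n) (s : ℝ) :
    deriv f (n + s) = 1 + cos (π * s) / 2 - π * ((n + s) / 2 + 1 / 4) * sin (π * s) := by
  have hphase : π * (n + s) = π * s + n * π := by ring
  rw [(hasDerivAt_f _).deriv, hphase, cos_add_nat_mul_pi, sin_add_nat_mul_pi, ho.neg_one_pow]
  ring

lemma one_add_cos_div_two_lt {t : ℝ} (ht0 : 0 < t) (ht1 : t ≤ 1) :
    1 + cos t / 2 < (3 / (2 * t) + π / 4) * sin t := by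
  have hcos : cos t ≤ 1 - t ^ 2 / 2 + t ^ 4 * (5 / 96) := by
    have := (abs_le.1 (cos_bound (abs_le.2 ⟨by linarith, ht1⟩))).2
    rw [abs_of_pos ht0] at this
    linarith
  have hsin : t - t ^ 3 / 6 < sin t := sin_gt_sub_cube ht0
  have hmain : 3 / 2 - t ^ 2 / 4 < 3 / (2 * t) * sin t := by
    rw [div_mul_eq_mul_div, lt_div_iff₀ (by positivity)]
    nlinarith
  have ht3 : t ^ 3 ≤ t := by nlinarith [pow_le_one₀ ht0.le ht1 (n := 2)]
  have ht4 : t ^ 4 ≤ t := by nlinarith [pow_le_one₀ ht0.le ht1 (n := 3)]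
  nlinarith [pi_gt_three]

theorem stmt_1 (n : ℕ) (hn : 0 < n) (ho : Odd n) :
    deriv f ((n : ℝ) + 3 / (Real.pi ^ 2 * n)) < 0 := by
  have hn1 : (1 : ℝ) ≤ n := by exact_mod_cast hn
  set t := 3 / (π * n) with ht
  have hπs : π * (3 / (π ^ 2 * n)) = t := by rw [ht]; field_simp
  have ht0 : 0 < t := by positivity
  have ht1 : t ≤ 1 := by
    rw [ht, div_le_one (by positivity)]
    nlinarith [pi_gt_three]
  have hcoeff : 3 / (2 * t) + π / 4 ≤ π * ((n + 3 / (π ^ 2 * n)) / 2 + 1 / 4) := by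
    have : 3 / (2 * t) = π * n / 2 := by rw [ht]; field_simp
    rw [this]
    have : 0 ≤ π * (3 / (π ^ 2 * n)) := by positivity
    nlinarith
  rw [deriv_f_odd_add n ho, hπs]
  nlinarith [one_add_cos_div_two_lt ht0 ht1, sin_pos_of_pos_of_le_one ht0 ht1]
end

section
/- For every positive even integer n, f maps the interval J_n = [n, n + 7/(2π²n)] into J_{n/2} = [n/2, n/2 + 7/(2π²(n/2))], i.e., f(J_n) ⊆ J_{f(n)}. -/
open Real

lemma f_add_of_even {n : ℤ} (hn : Even n) (t : ℝ) :
    f (n + t) = n / 2 + t / 2 + ((n + t) / 2 + 1 / 4) * (1 - cos (π * t)) := by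
  obtain ⟨k, rfl⟩ := hn
  have hcos : cos (π * ((k + k : ℤ) + t)) = cos (π * t) := by
    rw [← cos_add_int_mul_two_pi (π * t) k]
    push_cast
    ring_nf
  rw [f, hcos]
  ring

lemma mul_one_sub_cos_pi_mul_le {a t : ℝ} (ha : 2 ≤ a) (ht0 : 0 ≤ t)
    (ht : t ≤ 7 / (2 * π ^ 2 * a)) :
    ((a + t) / 2 + 1 / 4) * (1 - cos (π * t)) ≤ 3 / 2 * t := by
  have hpa : 0 < 2 * π ^ 2 * a := by positivity
  have hπt : π ^ 2 * t ≤ 7 / (2 * a) := by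
    rw [le_div_iff₀ (by positivity)]
    rw [le_div_iff₀ hpa] at ht
    linarith
  have ht_half : t ≤ 1 / 2 := by
    have hπ2 : 9 ≤ π ^ 2 := by nlinarith [pi_gt_three]
    have h74 : 7 / (2 * a) ≤ 7 / 4 := by gcongr; linarith
    nlinarith
  have hcos : 1 - cos (π * t) ≤ t * (π ^ 2 * t) / 2 := by
    nlinarith [one_sub_sq_div_two_le_cos (x := π * t)]
  calc ((a + t) / 2 + 1 / 4) * (1 - cos (π * t))
      ≤ 6 * a / 7 * (t * (7 / (2 * a)) / 2) := by
        refine mul_le_mul (by linarith) (hcos.trans (by gcongr)) ?_ (by positivity)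
        exact sub_nonneg.2 (cos_le_one _)
    _ = 3 / 2 * t := by field_simp; ring

theorem stmt_6 (n : ℕ) (hn : 0 < n) (he : Even n) :
    Set.MapsTo f (Set.Icc (n : ℝ) ((n : ℝ) + 7 / (2 * Real.pi ^ 2 * n)))
      (Set.Icc ((n : ℝ) / 2) ((n : ℝ) / 2 + 7 / (2 * Real.pi ^ 2 * ((n : ℝ) / 2)))) := by
  intro x ⟨hxn, hxJ⟩
  have hn2 : (2 : ℝ) ≤ n := by
    obtain ⟨k, rfl⟩ := he
    exact_mod_cast (by omega : 2 ≤ k + k)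
  have ht0 : 0 ≤ x - n := sub_nonneg.2 hxn
  have hfx := f_add_of_even (Int.even_coe_nat n |>.2 he) (x - n)
  rw [Int.cast_natCast, add_sub_cancel] at hfx
  have hupper := mul_one_sub_cos_pi_mul_le hn2 ht0 (by linarith)
  have hlower : 0 ≤ ((n + (x - n)) / 2 + 1 / 4) * (1 - cos (π * (x - n))) :=
    mul_nonneg (by linarith) (sub_nonneg.2 (cos_le_one _))
  have hJ : 7 / (2 * π ^ 2 * ((n : ℝ) / 2)) = 2 * (7 / (2 * π ^ 2 * n)) := by
    field_simp
  constructor <;> linarith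
end

section
/- For every positive odd integer n, f maps the interval J_n = [n, n + 7/(2π²n)] into J_{(3n+1)/2} = [(3n+1)/2, (3n+1)/2 + 7/(π²(3n+1))], i.e., f(J_n) ⊆ J_{f(n)}. -/
/-!
For odd `n` we have `cos (π (n + t)) = -cos (π t)`, so `f (n + t) = f n + oddIncrement n t`.
The bounds `θ²/2 - θ⁴/24 ≤ 1 - cos θ ≤ θ²/2 - θ⁴/32` turn both inclusions into polynomial
inequalities in `n`, `t` and `a = π² t`, constrained by `2 n a ≤ 7` and `π² > 9.8696`.
The lower inclusion is tight (within 0.2%) at `n = 1`; the upper one holds because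
`3a/2 - (2n+1) a²/8` is at most `9 / (2 (2n+1))`, which is below `7 / (3n+1)` with room to
absorb the quartic term.
-/

open Real

theorem one_sub_sq_div_two_add_pow_four_div_le_cos {x : ℝ} (hx : x ^ 2 ≤ 8) :
    1 - x ^ 2 / 2 + x ^ 4 / 32 ≤ cos x := by
  have hhalf : 0 ≤ 1 - (x / 2) ^ 2 / 2 := by nlinarith
  have hcos := one_sub_sq_div_two_le_cos (x := x / 2)
  have hdouble : cos x = 2 * cos (x / 2) ^ 2 - 1 := by
    rw [← cos_two_mul, mul_div_cancel₀ x two_ne_zero]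
  nlinarith [pow_le_pow_left₀ hhalf hcos 2]

theorem cos_le_one_sub_sq_div_two_add_pow_four_div (x : ℝ) :
    cos x ≤ 1 - x ^ 2 / 2 + x ^ 4 / 24 := by
  rcases le_total (x ^ 2) 12 with hx | hx
  · set u := |x| / 2
    have hu : 0 ≤ u := by positivity
    have hu2 : u ^ 2 = x ^ 2 / 4 := by rw [div_pow, sq_abs]; norm_num
    have hpos : 0 ≤ u - u ^ 3 / 6 := by nlinarith
    have hsin := sin_ge_sub_cube hu
    have hhalf : cos x = 1 - 2 * sin u ^ 2 := by
      rw [← cos_two_mul_eq_one_sub, mul_div_cancel₀ _ two_ne_zero, cos_abs]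
    have hexp : 2 * (u - u ^ 3 / 6) ^ 2 = x ^ 2 / 2 - x ^ 4 / 24 + (x ^ 2) ^ 3 / 1152 := by
      have : 2 * (u - u ^ 3 / 6) ^ 2 = 2 * u ^ 2 - 2 * (u ^ 2) ^ 2 / 3 + (u ^ 2) ^ 3 / 18 := by ring
      rw [this, hu2]; ring
    nlinarith [pow_le_pow_left₀ hpos hsin 2, pow_nonneg (sq_nonneg x) 3]
  · nlinarith [cos_le_one x]

theorem pi_sq_gt : (9.8696 : ℝ) < π ^ 2 := by
  nlinarith [pi_gt_d6]

noncomputable def oddIncrement (n t : ℝ) : ℝ :=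
  3 * t / 2 - (n / 2 + t / 2 + 1 / 4) * (1 - cos (π * t))

theorem f_natCast_add_of_odd {n : ℕ} (hn : Odd n) (t : ℝ) :
    f (n + t) = (3 * n + 1) / 2 + oddIncrement n t := by
  obtain ⟨k, rfl⟩ := hn
  have hcos : cos (π * ((2 * k + 1 : ℕ) + t)) = -cos (π * t) := by
    rw [show π * ((2 * k + 1 : ℕ) + t) = π * t + π + k * (2 * π) by push_cast; ring,
      cos_add_nat_mul_two_pi, cos_add_pi]
  rw [f, oddIncrement, hcos]
  ring

-- In the next two lemmas `a` stands for `π ^ 2 * t`.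
theorem oddIncrement_nonneg_aux (n a t : ℝ) (hn : 1 ≤ n) (ha : 0 ≤ a) (hna : 2 * n * a ≤ 7)
    (ht : 0 ≤ t) (hta : 9.8696 * t ≤ a) :
    (2 * n + 1 + 2 * t) * (a / 2 - a ^ 2 * t / 32) ≤ 6 := by
  have ha' : a ≤ 7 / 2 := by nlinarith
  have ht' : t ≤ 0.3547 := by linarith
  nlinarith [mul_nonneg ha ht, mul_nonneg (mul_nonneg ha ht) ha, mul_nonneg (sub_nonneg.2 hn) ha,
    mul_nonneg (sub_nonneg.2 ha') (sub_nonneg.2 ht'),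
    mul_nonneg (mul_nonneg ha ht) (sub_nonneg.2 hn)]

theorem oddIncrement_le_aux (n a t : ℝ) (hn : 1 ≤ n) (ha : 0 ≤ a) (hna : 2 * n * a ≤ 7)
    (hta : 9.8696 * t ≤ a) :
    (3 * n + 1) * (3 * a / 2 - (2 * n + 1) / 4 * (a ^ 2 / 2 - a ^ 3 * t / 24)) ≤ 7 := by
  have hat : n ^ 2 * (a * t) ≤ 5 / 4 := by
    have hna0 : 0 ≤ n * a := by positivity
    nlinarith [mul_le_mul_of_nonneg_left hta (mul_nonneg (sq_nonneg n) ha)]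
  -- with `a * t ≤ 5 / (4 n²)` the left side is at most a concave quadratic in `a`
  set C := (2 * n + 1) * (48 * n ^ 2 - 5)
  have hC : 0 < C := mul_pos (by linarith) (by nlinarith)
  have hquad : (3 * n + 1) * (576 * n ^ 2 * a - C * a ^ 2) ≤ 2688 * n ^ 2 := by
    have hsq : C * (576 * n ^ 2 * a - C * a ^ 2) ≤ (288 * n ^ 2) ^ 2 := by
      nlinarith [sq_nonneg (C * a - 288 * n ^ 2)]
    have hcoef : (3 * n + 1) * (288 * n ^ 2) ^ 2 ≤ 2688 * n ^ 2 * C := by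
      nlinarith [sq_nonneg n, mul_nonneg (sq_nonneg n) (sub_nonneg.2 hn)]
    refine le_of_mul_le_mul_left ?_ hC
    nlinarith [mul_le_mul_of_nonneg_left hsq (by positivity : (0:ℝ) ≤ 3 * n + 1)]
  have hn2 : 0 < n ^ 2 := by positivity
  refine le_of_mul_le_mul_left ?_ (by positivity : (0:ℝ) < 384 * n ^ 2)
  nlinarith [mul_le_mul_of_nonneg_left hat
    (by positivity : (0:ℝ) ≤ (3 * n + 1) * (2 * n + 1) * a ^ 2)]

theorem two_mul_mul_pi_sq_mul_le {n t : ℝ} (hn : 0 < n) (htn : t ≤ 7 / (2 * π ^ 2 * n)) :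
    2 * n * (π ^ 2 * t) ≤ 7 := by
  rw [le_div_iff₀ (by positivity)] at htn
  linarith

theorem oddIncrement_nonneg {n t : ℝ} (hn : 1 ≤ n) (ht : 0 ≤ t)
    (htn : t ≤ 7 / (2 * π ^ 2 * n)) : 0 ≤ oddIncrement n t := by
  rw [oddIncrement, sub_nonneg]
  have hna := two_mul_mul_pi_sq_mul_le (by linarith) htn
  set a := π ^ 2 * t
  have hta : 9.8696 * t ≤ a := mul_le_mul_of_nonneg_right pi_sq_gt.le ht
  have hθ : (π * t) ^ 2 = a * t := by ring
  have hcos := one_sub_sq_div_two_add_pow_four_div_le_cos (x := π * t) (by nlinarith)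
  have hpoly := oddIncrement_nonneg_aux n a t hn (by positivity) hna ht hta
  calc (n / 2 + t / 2 + 1 / 4) * (1 - cos (π * t))
      ≤ (n / 2 + t / 2 + 1 / 4) * (t * (a / 2 - a ^ 2 * t / 32)) := by
        gcongr
        rw [show (π * t) ^ 4 = ((π * t) ^ 2) ^ 2 by ring, hθ] at hcos
        linarith
    _ = t / 4 * ((2 * n + 1 + 2 * t) * (a / 2 - a ^ 2 * t / 32)) := by ring
    _ ≤ t / 4 * 6 := by gcongr
    _ = 3 * t / 2 := by ring

theorem oddIncrement_le {n t : ℝ} (hn : 1 ≤ n) (ht : 0 ≤ t)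
    (htn : t ≤ 7 / (2 * π ^ 2 * n)) : oddIncrement n t ≤ 7 / (π ^ 2 * (3 * n + 1)) := by
  have hna := two_mul_mul_pi_sq_mul_le (by linarith) htn
  set a := π ^ 2 * t
  have hta : 9.8696 * t ≤ a := mul_le_mul_of_nonneg_right pi_sq_gt.le ht
  have ha : 0 ≤ a := by positivity
  have hθ : (π * t) ^ 2 = a * t := by ring
  have hcos := cos_le_one_sub_sq_div_two_add_pow_four_div (π * t)
  rw [show (π * t) ^ 4 = ((π * t) ^ 2) ^ 2 by ring, hθ] at hcos
  have hat : a * t ≤ 2 := by nlinarith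
  have hgap : 0 ≤ a * t / 2 - (a * t) ^ 2 / 24 := by nlinarith [mul_nonneg ha ht]
  have hK : (2 * n + 1) / 4 * (a * t / 2 - (a * t) ^ 2 / 24)
      ≤ (n / 2 + t / 2 + 1 / 4) * (1 - cos (π * t)) :=
    mul_le_mul (by linarith) (by linarith) hgap (by linarith)
  have hpoly := oddIncrement_le_aux n a t hn ha hna hta
  rw [le_div_iff₀ (by positivity), oddIncrement]
  calc (3 * t / 2 - (n / 2 + t / 2 + 1 / 4) * (1 - cos (π * t))) * (π ^ 2 * (3 * n + 1))
      ≤ (3 * t / 2 - (2 * n + 1) / 4 * (a * t / 2 - (a * t) ^ 2 / 24))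
          * (π ^ 2 * (3 * n + 1)) := by
        gcongr
    _ = (3 * n + 1) * (3 * a / 2 - (2 * n + 1) / 4 * (a ^ 2 / 2 - a ^ 3 * t / 24)) := by ring
    _ ≤ 7 := hpoly

theorem stmt_7 (n : ℕ) (hn : 0 < n) (ho : Odd n) :
    Set.MapsTo f (Set.Icc (n : ℝ) ((n : ℝ) + 7 / (2 * Real.pi ^ 2 * n)))
      (Set.Icc ((3 * (n : ℝ) + 1) / 2)
        ((3 * (n : ℝ) + 1) / 2 + 7 / (Real.pi ^ 2 * (3 * (n : ℝ) + 1)))) := by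
  rintro x ⟨hnx, hxn⟩
  have hn1 : (1 : ℝ) ≤ n := by exact_mod_cast hn
  have ht : 0 ≤ x - n := sub_nonneg.2 hnx
  have htn : x - n ≤ 7 / (2 * π ^ 2 * n) := by linarith
  rw [← add_sub_cancel (n : ℝ) x, f_natCast_add_of_odd ho]
  exact ⟨le_add_of_nonneg_right (oddIncrement_nonneg hn1 ht htn),
    add_le_add_right (oddIncrement_le hn1 ht htn) _⟩
end

section
/- If every positive integer n has the property that f(J_n) ⊆ J_{T(n)} where J_m = [m, m + 7/(2π²m)], and if there exists a positive integer n₀ with limsup_{k→∞} f^k(n₀) = ∞, then the set U = {x ∈ ℝ⁺ : limsup_{k→∞} f^k(x) = ∞} contains a nonempty open interval. -/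
def T (n : ℕ) : ℕ := if Odd n then (3 * n + 1) / 2 else n / 2

noncomputable def J (m : ℕ) : Set ℝ := Set.Icc (m : ℝ) ((m : ℝ) + 7 / (2 * Real.pi ^ 2 * m))

theorem Set.MapsTo.iterate_of_family {α β : Type*} {g : α → α} {τ : β → β} {S : β → Set α}
    {P : β → Prop} (hP : ∀ b, P b → P (τ b)) (hS : ∀ b, P b → Set.MapsTo g (S b) (S (τ b)))
    (k : ℕ) {b : β} (hb : P b) : Set.MapsTo g^[k] (S b) (S (τ^[k] b)) := by
  induction k generalizing b with
  | zero => exact Set.mapsTo_id _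
  | succ k ih => exact (ih (hP b hb)).comp (hS b hb)

lemma T_pos {n : ℕ} (hn : 0 < n) : 0 < T n := by
  unfold T
  split_ifs with hodd
  · omega
  · obtain ⟨m, rfl⟩ := Nat.not_odd_iff_even.mp hodd
    omega

lemma J_length_le_one {m : ℕ} (hm : 0 < m) : 7 / (2 * Real.pi ^ 2 * m) ≤ 1 := by
  have hmR : (1 : ℝ) ≤ m := by exact_mod_cast hm
  have hπ : 3 < Real.pi := Real.pi_gt_three
  rw [div_le_one (by positivity)]
  nlinarith

lemma le_add_one_of_mem_J {m : ℕ} (hm : 0 < m) {x y : ℝ} (hx : x ∈ J m) (hy : y ∈ J m) :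
    y ≤ x + 1 := by
  linarith [hx.1, hy.2, J_length_le_one hm]

theorem stmt_8
    (hJ : ∀ n : ℕ, 0 < n → Set.MapsTo f (J n) (J (T n)))
    (hdiv : ∃ n₀ : ℕ, 0 < n₀ ∧ ∀ C : ℝ, ∃ᶠ k in Filter.atTop, C < f^[k] (n₀ : ℝ)) :
    ∃ a b : ℝ, a < b ∧
      Set.Ioo a b ⊆ {x : ℝ | 0 < x ∧ ∀ C : ℝ, ∃ᶠ k in Filter.atTop, C < f^[k] x} := by
  obtain ⟨n₀, hn₀, hd⟩ := hdiv
  have horbit (k : ℕ) : Set.MapsTo f^[k] (J n₀) (J (T^[k] n₀)) :=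
    Set.MapsTo.iterate_of_family (P := (0 < ·)) (fun _ => T_pos) hJ k hn₀
  have hn₀J : (n₀ : ℝ) ∈ J n₀ := ⟨le_rfl, le_add_of_nonneg_right (by positivity)⟩
  refine ⟨n₀, n₀ + 7 / (2 * Real.pi ^ 2 * n₀), lt_add_of_pos_right _ (by positivity), ?_⟩
  intro x hx
  have hxJ : x ∈ J n₀ := Set.Ioo_subset_Icc_self hx
  refine ⟨(Nat.cast_nonneg n₀).trans_lt hx.1, fun C => (hd (C + 1)).mono fun k hk => ?_⟩
  have := le_add_one_of_mem_J (Function.Iterate.rec (0 < ·) hn₀ (fun _ => T_pos) k) (horbit k hxJ) (horbit k hn₀J)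
  linarith
end

section
/- The geometric mean of g(t) = 1 - cos(πt)/2 over the interval [0,2] equals (2+√3)/4; that is, exp((1/2)·∫₀² ln(1 - cos(πt)/2) dt) = (2+√3)/4. -/
/-!
For `|r| < 1` the function `z ↦ log ‖z - r‖` is harmonic near the closed unit disc, so its mean
over the unit circle vanishes; since `‖e^{iθ} - r‖² = 1 - 2r cos θ + r²`, this gives
`∫₀^{2π} log (1 - 2r cos θ + r²) dθ = 0`. Writing `a - b cos θ = c (1 - 2r cos θ + r²)` with
`c = (a + √(a² - b²))/2` and `r = b/(2c)` then yields
`∫₀^{2π} log (a - b cos θ) dθ = 2π log c`; for `a = 1`, `b = 1/2` this is `c = (2 + √3)/4`,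
and the substitution `θ = πt` turns the mean over `[0, 2]` into the mean over `[0, 2π]`.
-/

open Real intervalIntegral

theorem norm_circleMap_sub_ofReal_sq (r θ : ℝ) :
    ‖circleMap 0 1 θ - r‖ ^ 2 = 1 - 2 * r * cos θ + r ^ 2 := by
  rw [← Complex.normSq_eq_norm_sq, Complex.normSq_apply]
  simp [circleMap, Complex.exp_ofReal_mul_I_re, Complex.exp_ofReal_mul_I_im]
  nlinarith [sin_sq_add_cos_sq θ]

theorem integral_log_one_sub_two_mul_cos_add_sq {r : ℝ} (hr : |r| < 1) :
    ∫ θ in (0:ℝ)..2 * π, log (1 - 2 * r * cos θ + r ^ 2) = 0 := by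
  have hmean := circleAverage_log_norm_sub_const₀ (a := (r : ℂ)) (by simpa using hr)
  rw [circleAverage_def, smul_eq_zero] at hmean
  simp_rw [← norm_circleMap_sub_ofReal_sq, log_pow]
  rw [integral_const_mul, hmean.resolve_left (by positivity), mul_zero]

theorem integral_log_sub_mul_cos {a b : ℝ} (hab : |b| < a) :
    ∫ θ in (0:ℝ)..2 * π, log (a - b * cos θ) = 2 * π * log ((a + √(a ^ 2 - b ^ 2)) / 2) := by
  have ha : 0 < a := (abs_nonneg b).trans_lt hab
  set s := √(a ^ 2 - b ^ 2)
  have hs2 : s ^ 2 = a ^ 2 - b ^ 2 := sq_sqrt (by nlinarith [abs_nonneg b, sq_abs b])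
  have hs : 0 < s := sqrt_pos.2 (by nlinarith [abs_nonneg b, sq_abs b])
  set c := (a + s) / 2
  have hc : 0 < c := by positivity
  set r := b / (2 * c)
  have hr : |r| < 1 := by
    rw [abs_div, abs_of_pos (by positivity : (0:ℝ) < 2 * c), div_lt_one (by positivity)]
    simp only [c]
    linarith
  have hfactor : ∀ θ, a - b * cos θ = c * (1 - 2 * r * cos θ + r ^ 2) := fun θ => by
    simp only [r, c]
    field_simp
    linear_combination -hs2
  have hpos : ∀ θ, 0 < 1 - 2 * r * cos θ + r ^ 2 := fun θ => by
    refine pos_of_mul_pos_right (hfactor θ ▸ ?_) hc.le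
    have := abs_le.1 (abs_mul b (cos θ) ▸
      mul_le_of_le_one_right (abs_nonneg b) (abs_cos_le_one θ))
    linarith
  have hint : IntervalIntegrable (fun θ => log (1 - 2 * r * cos θ + r ^ 2))
      MeasureTheory.volume 0 (2 * π) :=
    (Continuous.log (by fun_prop) fun θ => (hpos θ).ne').intervalIntegrable _ _
  simp_rw [hfactor, log_mul hc.ne' (hpos _).ne']
  rw [integral_add intervalIntegrable_const hint, integral_log_one_sub_two_mul_cos_add_sq hr]
  simp

theorem stmt_9 :
    Real.exp ((1/2) * ∫ t in (0:ℝ)..2, Real.log (1 - Real.cos (Real.pi * t) / 2)) =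
      (2 + Real.sqrt 3) / 4 := by
  have hsqrt : √(1 ^ 2 - (1 / 2) ^ 2 : ℝ) = √3 / 2 := by
    rw [show (1 ^ 2 - (1 / 2) ^ 2 : ℝ) = 3 / 2 ^ 2 by norm_num, sqrt_div' _ (by norm_num),
      sqrt_sq (by norm_num)]
  have hperiod : ∫ θ in (0:ℝ)..2 * π, log (1 - cos θ / 2) = 2 * π * log ((2 + √3) / 4) := by
    simp_rw [div_eq_inv_mul (cos _), ← one_div]
    rw [integral_log_sub_mul_cos (by norm_num), hsqrt]
    congr 2
    ring
  have hsub : ∫ t in (0:ℝ)..2, log (1 - cos (π * t) / 2) = 2 * log ((2 + √3) / 4) := by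
    rw [integral_comp_mul_left (fun θ => log (1 - cos θ / 2)) pi_ne_zero, mul_zero,
      mul_comm π 2, hperiod, smul_eq_mul]
    field_simp
  rw [hsub, ← mul_assoc, one_div_mul_cancel two_ne_zero, one_mul, exp_log (by positivity)]
end

section
/- For every nonzero real x, f(x) has the same sign as x; consequently, f^n(x) has the same sign as x for every n ≥ 0 and every nonzero real x. -/
/-!
For `x > 0` both summands of `f x = (1 - cos (π x) / 2) x + (1 - cos (π x)) / 4` are nonnegative
and the first is at least `x / 2`. For `x < 0`, `f` is affine in `c = cos (π x)` with slope
`-(x / 2 + 1 / 4)`: when `x ≤ -1/2` the slope is nonnegative and `c ≤ 1` gives `f x ≤ x / 2`;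
when `-1/2 ≤ x ≤ 0` it is nonpositive and the chord bound `1 + 2x ≤ cos (π x)` gives `f x ≤ -x²`.
-/

open Real Set

lemma half_le_f {x : ℝ} (hx : 0 ≤ x) : x / 2 ≤ f x := by
  have hcos := cos_le_one (π * x)
  unfold f
  nlinarith

lemma f_le_half {x : ℝ} (hx : x ≤ -(1 / 2)) : f x ≤ x / 2 := by
  have hcos := cos_le_one (π * x)
  unfold f
  nlinarith

lemma f_le_neg_sq {x : ℝ} (hx₀ : -(1 / 2) ≤ x) (hx : x ≤ 0) : f x ≤ -x ^ 2 := by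
  have hchord : 1 + 2 * x ≤ cos (π * x) := by
    have := one_add_mul_le_cos (x := π * x) (by nlinarith [pi_pos]) (by nlinarith [pi_pos])
    rwa [← mul_assoc, div_mul_cancel₀ _ pi_ne_zero] at this
  unfold f
  nlinarith

lemma f_pos {x : ℝ} (hx : 0 < x) : 0 < f x := by
  linarith [half_le_f hx.le]

lemma f_neg {x : ℝ} (hx : x < 0) : f x < 0 := by
  rcases le_total x (-(1 / 2)) with hx' | hx'
  · linarith [f_le_half hx']
  · nlinarith [f_le_neg_sq hx' hx.le]

lemma mapsTo_f_Ioi : MapsTo f (Ioi 0) (Ioi 0) := fun _ => f_pos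

lemma mapsTo_f_Iio : MapsTo f (Iio 0) (Iio 0) := fun _ => f_neg

theorem stmt_13_general (x : ℝ) :
    ((0 < x → 0 < f x) ∧ (x < 0 → f x < 0)) ∧
    ∀ n : ℕ, (0 < x → 0 < f^[n] x) ∧ (x < 0 → f^[n] x < 0) :=
  ⟨⟨f_pos, f_neg⟩, fun n => ⟨fun h => mapsTo_f_Ioi.iterate n h, fun h => mapsTo_f_Iio.iterate n h⟩⟩

theorem stmt_13 (x : ℝ) (hx : x ≠ 0) :
    ((0 < x → 0 < f x) ∧ (x < 0 → f x < 0)) ∧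
    ∀ n : ℕ, (0 < x → 0 < f^[n] x) ∧ (x < 0 → f^[n] x < 0) :=
  stmt_13_general x
end

section
/- Suppose S = {f^i(x)}_{i=0}^{n} is a finite orbit segment with min_{0≤i<n} |f^i(x)| ≥ M for some real M > 1/3, and write f(t) = g(t)·(t + h(t)) with g(t) = 1 - cos(πt)/2 and h(t) = (1-cos(πt))/(4-2cos(πt)). Then |(1/n)·ln(f^n(x)/x) - ln τ| < 2·(ln 3)·D*_n + (-ln(1 - 1/(3M))), where τ = (2+√3)/4 and D*_n is the star discrepancy of the sequence {f^i(x) mod 2}_{i=0}^{n-1} in [0,2]. -/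
/-- The value of `x` modulo 2, in `[0,2)`. -/
noncomputable def mod2 (x : ℝ) : ℝ := x - 2 * ⌊x / 2⌋

/-- Star discrepancy in `[0,2]` of the first `n` points `f^[i] x mod 2`. -/
noncomputable def Dstar (x : ℝ) (n : ℕ) : ℝ :=
  ⨆ c : Set.Icc (0:ℝ) 2,
    |(((Finset.range n).filter (fun i => mod2 (f^[i] x) < (c : ℝ))).card : ℝ) / n - (c : ℝ) / 2|

/-!
Write `f t / t = g t * (1 + h t / t)`. Along the orbit, `log (f^[n] x / x)` telescopes into
`∑ log g (f^[i] x) + ∑ log (1 + h (f^[i] x) / f^[i] x)`. Since `g` is 2-periodic, Koksma's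
inequality compares the first average with `(1/2) ∫₀² log g = log τ`, with error at most the
total variation `2 log 3` of `log g` times the discrepancy; the mean of `log g` comes from Jensen's
formula, `∫₀^{2π} log |e^{iθ} - r| dθ = 0` for `r = 2 - √3`, because
`|e^{iθ} - r|² = 4r (1 - cos θ / 2)`. Each term of the second average lies in
`[log (1 - 1/(3M)), log (1 + 1/(3M))]` as `0 ≤ h ≤ 1/3`. The lower end is attained only where
`cos (π t) = -1`; if that happens along the whole orbit segment, then `g = 3/2` there and the first
average exceeds `log τ`, which gives strictness.
-/

open Real MeasureTheory intervalIntegral Set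
open scoped Finset BigOperators

section Koksma

variable {φ φ' : ℝ → ℝ} {a b : ℝ}

lemma eq_sub_integral_indicator_Ioi (hφ : ∀ t ∈ Icc a b, HasDerivAt φ (φ' t) t)
    (hφ' : ContinuousOn φ' (Icc a b)) {y : ℝ} (hy : y ∈ Icc a b) :
    φ y = φ b - ∫ t in a..b, (Ioi y).indicator φ' t := by
  have hsub : uIcc y b ⊆ Icc a b := uIcc_subset_Icc hy (right_mem_Icc.2 (hy.1.trans hy.2))
  have hFTC : ∫ t in y..b, φ' t = φ b - φ y :=
    integral_eq_sub_of_hasDerivAt (fun t ht => hφ t (hsub ht)) (hφ'.mono hsub).intervalIntegrable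
  rw [integral_of_le (hy.1.trans hy.2), setIntegral_indicator measurableSet_Ioi, Ioc_inter_Ioi,
    sup_eq_right.2 hy.1, ← integral_of_le hy.2, hFTC]
  ring

lemma sum_indicator_Ioi_eq_card_mul (ψ : ℝ → ℝ) (y : ℕ → ℝ) (n : ℕ) (t : ℝ) :
    ∑ i ∈ Finset.range n, (Ioi (y i)).indicator ψ t
      = #{i ∈ Finset.range n | y i < t} * ψ t := by
  simp only [indicator_apply, mem_Ioi]
  rw [Finset.sum_ite, Finset.sum_const_zero, add_zero, Finset.sum_const, nsmul_eq_mul]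

lemma sum_eq_mul_sub_integral_card_mul (hφ : ∀ t ∈ Icc a b, HasDerivAt φ (φ' t) t)
    (hφ' : ContinuousOn φ' (Icc a b)) (hab : a ≤ b) {n : ℕ} {y : ℕ → ℝ}
    (hy : ∀ i < n, y i ∈ Icc a b) :
    ∑ i ∈ Finset.range n, φ (y i)
      = n * φ b - ∫ t in a..b, #{i ∈ Finset.range n | y i < t} * φ' t := by
  have hind : ∀ i ∈ Finset.range n,
      IntervalIntegrable ((Ioi (y i)).indicator φ') volume a b := fun i _ =>
    (intervalIntegrable_iff_integrableOn_Ioc_of_le hab).2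
      ((hφ'.integrableOn_Icc.mono_set Ioc_subset_Icc_self).indicator measurableSet_Ioi)
  simp_rw [← sum_indicator_Ioi_eq_card_mul]
  rw [integral_finsetSum hind, Finset.sum_congr rfl
    (fun i hi => eq_sub_integral_indicator_Ioi hφ hφ' (hy i (Finset.mem_range.1 hi))),
    Finset.sum_sub_distrib, Finset.sum_const, Finset.card_range, nsmul_eq_mul]

lemma average_eq_sub_integral (hab : a < b) (hφ : ∀ t ∈ Icc a b, HasDerivAt φ (φ' t) t)
    (hφ' : ContinuousOn φ' (Icc a b)) :
    (1 / (b - a)) * ∫ t in a..b, φ t = φ b - ∫ t in a..b, (t - a) / (b - a) * φ' t := by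
  have hv : ∀ t, HasDerivAt (fun t => (t - a) / (b - a)) (1 / (b - a)) t := fun t =>
    ((hasDerivAt_id t).sub_const a).div_const (b - a)
  have hIBP := integral_mul_deriv_eq_deriv_mul (a := a) (b := b) (u := φ)
    (fun t ht => hφ t (by rwa [uIcc_of_le hab.le] at ht)) (fun t _ => hv t)
    (hφ'.intervalIntegrable_of_Icc hab.le) intervalIntegrable_const
  rw [intervalIntegral.integral_mul_const] at hIBP
  simp only [sub_self, zero_div, mul_zero, sub_zero, div_self (sub_ne_zero.2 hab.ne'),
    mul_one] at hIBP
  rw [mul_comm, hIBP]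
  congr 1
  exact integral_congr fun t _ => mul_comm _ _

theorem koksma_inequality (hab : a < b) (hφ : ∀ t ∈ Icc a b, HasDerivAt φ (φ' t) t)
    (hφ' : ContinuousOn φ' (Icc a b)) {n : ℕ} (hn : 0 < n) {y : ℕ → ℝ}
    (hy : ∀ i < n, y i ∈ Icc a b) {D : ℝ}
    (hD : ∀ c ∈ Icc a b, |(#{i ∈ Finset.range n | y i < c} : ℝ) / n - (c - a) / (b - a)| ≤ D) :
    |(1 / n) * ∑ i ∈ Finset.range n, φ (y i) - (1 / (b - a)) * ∫ t in a..b, φ t|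
      ≤ (∫ t in a..b, |φ' t|) * D := by
  set N : ℝ → ℝ := fun t => #{i ∈ Finset.range n | y i < t}
  have hN : Monotone N := fun s t hst => by
    simp only [N]
    exact_mod_cast Finset.card_le_card
      (Finset.monotone_filter_right _ fun i _ (his : y i < s) => his.trans_le hst)
  have hφ'uIcc : ContinuousOn φ' (uIcc a b) := by rwa [uIcc_of_le hab.le]
  have hlin : IntervalIntegrable (fun t => (t - a) / (b - a)) volume a b :=
    ((continuous_id.sub continuous_const).div_const _).intervalIntegrable a b
  have hNφ' : IntervalIntegrable (fun t => N t * φ' t) volume a b :=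
    hN.intervalIntegrable.mul_continuousOn hφ'uIcc
  have herror : (1 / n) * ∑ i ∈ Finset.range n, φ (y i) - (1 / (b - a)) * ∫ t in a..b, φ t
      = ∫ t in a..b, ((t - a) / (b - a) - N t / n) * φ' t := by
    have hsplit : ∀ t, ((t - a) / (b - a) - N t / n) * φ' t
        = (t - a) / (b - a) * φ' t - (1 / n) * (N t * φ' t) := fun t => by ring
    simp_rw [hsplit]
    rw [integral_sub (hlin.mul_continuousOn hφ'uIcc) (hNφ'.const_mul _),
      intervalIntegral.integral_const_mul, sum_eq_mul_sub_integral_card_mul hφ hφ' hab.le hy,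
      average_eq_sub_integral hab hφ hφ']
    field_simp
    ring
  rw [herror]
  calc |∫ t in a..b, ((t - a) / (b - a) - N t / n) * φ' t|
      ≤ ∫ t in a..b, |((t - a) / (b - a) - N t / n) * φ' t| :=
        abs_integral_le_integral_abs hab.le
    _ ≤ ∫ t in a..b, D * |φ' t| := by
        refine integral_mono_on hab.le
          (((hlin.sub (hN.intervalIntegrable.div_const _)).mul_continuousOn hφ'uIcc).abs)
          (hφ'uIcc.intervalIntegrable.abs.const_mul D) fun t ht => ?_
        rw [abs_mul, abs_sub_comm]
        exact mul_le_mul_of_nonneg_right (hD t ht) (abs_nonneg _)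
    _ = (∫ t in a..b, |φ' t|) * D := by rw [intervalIntegral.integral_const_mul, mul_comm]

end Koksma

lemma norm_exp_mul_I_sub_sq (r θ : ℝ) :
    ‖Complex.exp (θ * Complex.I) - r‖ ^ 2 = 1 - 2 * r * cos θ + r ^ 2 := by
  rw [Complex.sq_norm, Complex.normSq_apply]
  simp only [Complex.sub_re, Complex.sub_im, Complex.exp_ofReal_mul_I_re,
    Complex.exp_ofReal_mul_I_im, Complex.ofReal_re, Complex.ofReal_im, sub_zero]
  nlinarith [sin_sq_add_cos_sq θ]

lemma integral_log_one_sub_cos_div_two :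
    ∫ θ in 0..2 * π, log (1 - cos θ / 2) = 2 * π * log ((2 + √3) / 4) := by
  have hsqrt := sq_sqrt (show (0 : ℝ) ≤ 3 by norm_num)
  set r : ℝ := 2 - √3
  have hr : ‖(r : ℂ)‖ < 1 := by
    rw [Complex.norm_real, Real.norm_eq_abs, abs_lt]
    constructor <;> nlinarith [sqrt_nonneg 3]
  have hr4 : 0 < 4 * r := by nlinarith [sqrt_nonneg 3]
  have hlog : ∀ θ, log ‖circleMap 0 1 θ - r‖ = (log (4 * r) + log (1 - cos θ / 2)) / 2 := by
    intro θ
    have hq : 1 - 2 * r * cos θ + r ^ 2 = 4 * r * (1 - cos θ / 2) := by nlinarith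
    have hpos : 0 < 1 - cos θ / 2 := by linarith [cos_le_one θ]
    rw [← log_mul hr4.ne' hpos.ne', ← hq, ← norm_exp_mul_I_sub_sq, log_pow, circleMap_zero]
    push_cast
    ring_nf
  have hcont : Continuous fun θ => log (1 - cos θ / 2) :=
    (continuous_const.sub (continuous_cos.div_const 2)).log fun θ => by
      simp only [Pi.sub_apply]; linarith [cos_le_one θ]
  have havg := circleAverage_log_norm_sub_const₀ hr
  rw [circleAverage_def, smul_eq_mul] at havg
  simp_rw [hlog] at havg
  rw [intervalIntegral.integral_div, integral_add intervalIntegrable_const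
    (hcont.intervalIntegrable _ _), intervalIntegral.integral_const, smul_eq_mul] at havg
  have hτ : log ((2 + √3) / 4) = -log (4 * r) := by
    rw [← log_inv, eq_inv_of_mul_eq_one_left (a := (2 + √3) / 4)]
    nlinarith
  have hint := (mul_eq_zero.1 havg).resolve_left (by positivity)
  rw [hτ]
  linarith

lemma one_div_mul_sum_range_eq_expect (b : ℕ → ℝ) (n : ℕ) :
    (1 / n : ℝ) * ∑ i ∈ Finset.range n, b i = 𝔼 i ∈ Finset.range n, b i := by
  rw [Finset.expect_eq_sum_div_card, Finset.card_range, one_div_mul_eq_div]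

lemma div_eq_prod_range_div {K : Type*} [Field K] {u : ℕ → K} {n : ℕ} (hn : n ≠ 0)
    (hu : ∀ i < n, u i ≠ 0) : u n / u 0 = ∏ i ∈ Finset.range n, u (i + 1) / u i := by
  induction n with
  | zero => exact absurd rfl hn
  | succ k ih =>
    rcases eq_or_ne k 0 with rfl | hk
    · simp
    rw [Finset.prod_range_succ, ← ih hk fun i hi => hu i (hi.trans k.lt_succ_self), mul_comm,
      div_mul_div_cancel₀ (hu k k.lt_succ_self)]

namespace CollatzExtension

noncomputable def g (t : ℝ) : ℝ := 1 - cos (π * t) / 2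

noncomputable def h (t : ℝ) : ℝ := (1 - cos (π * t)) / (4 - 2 * cos (π * t))

lemma g_pos (t : ℝ) : 0 < g t := by
  rw [g]
  linarith [cos_le_one (π * t)]

lemma four_sub_two_mul_cos_pos (t : ℝ) : 0 < 4 - 2 * cos (π * t) := by
  linarith [cos_le_one (π * t)]

lemma h_nonneg (t : ℝ) : 0 ≤ h t :=
  div_nonneg (by linarith [cos_le_one (π * t)]) (four_sub_two_mul_cos_pos t).le

lemma h_le_one_third (t : ℝ) : h t ≤ 1 / 3 := by
  rw [h, div_le_iff₀ (four_sub_two_mul_cos_pos t)]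
  linarith [neg_one_le_cos (π * t)]

lemma h_lt_one_third {t : ℝ} (hc : cos (π * t) ≠ -1) : h t < 1 / 3 := by
  rw [h, div_lt_iff₀ (four_sub_two_mul_cos_pos t)]
  linarith [(neg_one_le_cos (π * t)).lt_of_ne hc.symm]

lemma f_eq_g_mul (t : ℝ) : f t = g t * (t + h t) := by
  have := (four_sub_two_mul_cos_pos t).ne'
  rw [f, g, h]
  generalize cos (π * t) = c at *
  field_simp
  ring

lemma abs_h_div_le {M t : ℝ} (hM : 0 < M) (ht : M ≤ |t|) : |h t / t| ≤ h t / M := by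
  rw [abs_div, abs_of_nonneg (h_nonneg t)]
  exact div_le_div_of_nonneg_left (h_nonneg t) hM ht

lemma ne_zero_of_one_third_lt_abs {t : ℝ} (ht : 1 / 3 < |t|) : t ≠ 0 :=
  abs_pos.1 (by linarith)

lemma one_add_h_div_pos {t : ℝ} (ht : 1 / 3 < |t|) : 0 < 1 + h t / t := by
  have h1 := abs_h_div_le (t := t) (by linarith) le_rfl
  have h2 : h t / |t| < 1 := (div_lt_one (by linarith)).2 ((h_le_one_third t).trans_lt ht)
  linarith [neg_abs_le (h t / t)]

lemma f_div_self {t : ℝ} (ht : t ≠ 0) : f t / t = g t * (1 + h t / t) := by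
  rw [f_eq_g_mul]
  field_simp

lemma f_div_self_pos {t : ℝ} (ht : 1 / 3 < |t|) : 0 < f t / t := by
  rw [f_div_self (ne_zero_of_one_third_lt_abs ht)]
  exact mul_pos (g_pos t) (one_add_h_div_pos ht)

lemma log_f_div_self {t : ℝ} (ht : 1 / 3 < |t|) :
    log (f t / t) = log (g t) + log (1 + h t / t) := by
  rw [f_div_self (ne_zero_of_one_third_lt_abs ht),
    log_mul (g_pos t).ne' (one_add_h_div_pos ht).ne']

lemma log_iterate_div_eq_sum {x : ℝ} {n : ℕ} (hn : 0 < n) (hx : ∀ i < n, 1 / 3 < |f^[i] x|) :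
    log (f^[n] x / x) =
      ∑ i ∈ Finset.range n, (log (g (f^[i] x)) + log (1 + h (f^[i] x) / f^[i] x)) := by
  have hprod := div_eq_prod_range_div (u := fun i => f^[i] x) hn.ne'
    fun i hi => ne_zero_of_one_third_lt_abs (hx i hi)
  simp only [Function.iterate_zero_apply, Function.iterate_succ_apply'] at hprod
  rw [hprod, log_prod fun i hi => (f_div_self_pos (hx i (Finset.mem_range.1 hi))).ne']
  exact Finset.sum_congr rfl fun i hi => log_f_div_self (hx i (Finset.mem_range.1 hi))

lemma h_div_le_one_div_three_mul {M : ℝ} (hM : 0 < M) (t : ℝ) : h t / M ≤ 1 / (3 * M) := by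
  rw [div_le_div_iff₀ hM (by positivity)]
  nlinarith [h_le_one_third t]

lemma h_div_lt_one_div_three_mul {M t : ℝ} (hM : 0 < M) (hc : cos (π * t) ≠ -1) :
    h t / M < 1 / (3 * M) := by
  rw [div_lt_div_iff₀ hM (by positivity)]
  nlinarith [h_lt_one_third hc]

lemma log_one_add_h_div_lt {M t : ℝ} (hM : 1 / 3 < M) (ht : M ≤ |t|) :
    log (1 + h t / t) < -log (1 - 1 / (3 * M)) := by
  have hM0 : 0 < M := by linarith
  have ha0 : 0 < 1 / (3 * M) := by positivity
  have ha1 : 1 / (3 * M) < 1 := by rw [div_lt_one (by positivity)]; linarith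
  have hprod : log (1 + 1 / (3 * M)) + log (1 - 1 / (3 * M)) < 0 := by
    rw [← log_mul (by positivity) (by linarith)]
    exact log_neg (by nlinarith) (by nlinarith)
  have hle : log (1 + h t / t) ≤ log (1 + 1 / (3 * M)) :=
    log_le_log (one_add_h_div_pos (hM.trans_le ht)) (by
      linarith [le_abs_self (h t / t), abs_h_div_le hM0 ht, h_div_le_one_div_three_mul hM0 t])
  linarith

lemma one_sub_h_div_le {M t : ℝ} (hM : 0 < M) (ht : M ≤ |t|) : 1 - h t / M ≤ 1 + h t / t := by
  linarith [neg_abs_le (h t / t), abs_h_div_le hM ht]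

lemma one_sub_one_div_three_mul_pos {M : ℝ} (hM : 1 / 3 < M) : 0 < 1 - 1 / (3 * M) := by
  rw [sub_pos, div_lt_one (by linarith)]
  linarith

lemma log_one_sub_le_log_one_add_h_div {M t : ℝ} (hM : 1 / 3 < M) (ht : M ≤ |t|) :
    log (1 - 1 / (3 * M)) ≤ log (1 + h t / t) := by
  have hM0 : 0 < M := by linarith
  exact log_le_log (one_sub_one_div_three_mul_pos hM)
    (by linarith [one_sub_h_div_le hM0 ht, h_div_le_one_div_three_mul hM0 t])

lemma log_one_sub_lt_log_one_add_h_div {M t : ℝ} (hM : 1 / 3 < M) (ht : M ≤ |t|)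
    (hc : cos (π * t) ≠ -1) : log (1 - 1 / (3 * M)) < log (1 + h t / t) := by
  have hM0 : 0 < M := by linarith
  exact log_lt_log (one_sub_one_div_three_mul_pos hM)
    (by linarith [one_sub_h_div_le hM0 ht, h_div_lt_one_div_three_mul hM0 hc])

lemma g_mod2 (t : ℝ) : g (mod2 t) = g t := by
  rw [g, g, mod2, show π * (t - 2 * ⌊t / 2⌋) = π * t - ⌊t / 2⌋ * (2 * π) by ring,
    cos_sub_int_mul_two_pi]

lemma mod2_mem_Icc (t : ℝ) : mod2 t ∈ Icc 0 2 := by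
  rw [mod2]
  constructor <;> linarith [Int.floor_le (t / 2), Int.lt_floor_add_one (t / 2)]

lemma integral_log_g : ∫ t in (0 : ℝ)..2, log (g t) = 2 * log ((2 + √3) / 4) := by
  simp only [g]
  rw [intervalIntegral.integral_comp_mul_left (fun θ => log (1 - cos θ / 2)) pi_ne_zero,
    mul_zero, mul_comm π 2, integral_log_one_sub_cos_div_two, smul_eq_mul]
  field_simp

noncomputable def gLogDeriv (t : ℝ) : ℝ := π * sin (π * t) / 2 / g t

lemma hasDerivAt_log_g (t : ℝ) : HasDerivAt (fun t => log (g t)) (gLogDeriv t) t := by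
  have hcos : HasDerivAt (fun t => cos (π * t)) (-sin (π * t) * π) t := by
    simpa using ((hasDerivAt_id t).const_mul π).cos
  have hg : HasDerivAt g (π * sin (π * t) / 2) t :=
    ((hcos.div_const 2).const_sub 1).congr_deriv (by ring)
  exact hg.log (g_pos t).ne'

lemma continuous_gLogDeriv : Continuous gLogDeriv :=
  (by fun_prop : Continuous fun t => π * sin (π * t) / 2).div (by unfold g; fun_prop)
    fun t => (g_pos t).ne'

lemma integral_gLogDeriv (a b : ℝ) : ∫ t in a..b, gLogDeriv t = log (g b) - log (g a) :=
  integral_eq_sub_of_hasDerivAt (fun t _ => hasDerivAt_log_g t)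
    (continuous_gLogDeriv.intervalIntegrable a b)

lemma gLogDeriv_nonneg {t : ℝ} (ht : t ∈ Icc 0 1) : 0 ≤ gLogDeriv t := by
  have : 0 ≤ sin (π * t) :=
    sin_nonneg_of_nonneg_of_le_pi (by nlinarith [pi_pos, ht.1]) (by nlinarith [pi_pos, ht.2])
  exact div_nonneg (by positivity) (g_pos t).le

lemma gLogDeriv_nonpos {t : ℝ} (ht : t ∈ Icc 1 2) : gLogDeriv t ≤ 0 := by
  have : sin (π * t) ≤ 0 := by
    rw [← sin_sub_two_pi]
    exact sin_nonpos_of_nonpos_of_neg_pi_le (by nlinarith [pi_pos, ht.2])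
      (by nlinarith [pi_pos, ht.1])
  exact div_nonpos_of_nonpos_of_nonneg (by nlinarith [pi_pos]) (g_pos t).le

lemma log_g_zero : log (g 0) = -log 2 := by
  rw [g, mul_zero, cos_zero, show (1 : ℝ) - 1 / 2 = 2⁻¹ by norm_num, log_inv]

lemma log_g_one : log (g 1) = log 3 - log 2 := by
  rw [g, mul_one, cos_pi, ← log_div (by norm_num) (by norm_num)]
  norm_num

lemma log_g_two : log (g 2) = -log 2 := by
  rw [g, mul_comm, cos_two_pi, show (1 : ℝ) - 1 / 2 = 2⁻¹ by norm_num, log_inv]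

lemma integral_abs_gLogDeriv : ∫ t in (0 : ℝ)..2, |gLogDeriv t| = 2 * log 3 := by
  have hint : ∀ a b : ℝ, IntervalIntegrable (fun t => |gLogDeriv t|) volume a b :=
    fun a b => continuous_gLogDeriv.abs.intervalIntegrable a b
  have h01 : ∫ t in (0 : ℝ)..1, |gLogDeriv t| = ∫ t in (0 : ℝ)..1, gLogDeriv t :=
    integral_congr fun t ht =>
      abs_of_nonneg (gLogDeriv_nonneg (by rwa [uIcc_of_le zero_le_one] at ht))
  have h12 : ∫ t in (1 : ℝ)..2, |gLogDeriv t| = ∫ t in (1 : ℝ)..2, -gLogDeriv t :=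
    integral_congr fun t ht =>
      abs_of_nonpos (gLogDeriv_nonpos (by rwa [uIcc_of_le one_le_two] at ht))
  rw [← integral_add_adjacent_intervals (hint 0 1) (hint 1 2), h01, h12,
    intervalIntegral.integral_neg, integral_gLogDeriv, integral_gLogDeriv, log_g_zero,
    log_g_one, log_g_two]
  ring

lemma abs_card_div_sub_le_Dstar (x : ℝ) (n : ℕ) {c : ℝ} (hc : c ∈ Icc (0 : ℝ) 2) :
    |(#{i ∈ Finset.range n | mod2 (f^[i] x) < c} : ℝ) / n - c / 2| ≤ Dstar x n := by
  refine le_ciSup (f := fun c : Icc (0 : ℝ) 2 => |(#{i ∈ Finset.range n | mod2 (f^[i] x) < c} : ℝ)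
    / n - c / 2|) ⟨1, ?_⟩ ⟨c, hc⟩
  rintro _ ⟨c, rfl⟩
  have hcard : (#{i ∈ Finset.range n | mod2 (f^[i] x) < c} : ℝ) ≤ n := by
    exact_mod_cast (Finset.card_filter_le _ _).trans (Finset.card_range n).le
  exact abs_sub_le_of_nonneg_of_le (by positivity) (div_le_one_of_le₀ hcard n.cast_nonneg)
    (by linarith [c.2.1]) (by linarith [c.2.2])

lemma abs_expect_log_g_sub_le (x : ℝ) {n : ℕ} (hn : 0 < n) :
    |𝔼 i ∈ Finset.range n, log (g (f^[i] x)) - log ((2 + √3) / 4)| ≤ 2 * log 3 * Dstar x n := by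
  have hD : ∀ c ∈ Icc (0 : ℝ) 2,
      |(#{i ∈ Finset.range n | mod2 (f^[i] x) < c} : ℝ) / n - (c - 0) / (2 - 0)| ≤ Dstar x n :=
    fun c hc => by simpa only [sub_zero] using abs_card_div_sub_le_Dstar x n hc
  have hK := koksma_inequality two_pos (fun t _ => hasDerivAt_log_g t)
    continuous_gLogDeriv.continuousOn hn (fun i _ => mod2_mem_Icc _) hD
  simp only [g_mod2, integral_log_g, integral_abs_gLogDeriv] at hK
  rw [← one_div_mul_sum_range_eq_expect]
  convert hK using 3
  ring

lemma log_tau_lt_expect_log_g {n : ℕ} (hn : 0 < n) {t : ℕ → ℝ}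
    (hc : ∀ i < n, cos (π * t i) = -1) :
    log ((2 + √3) / 4) < 𝔼 i ∈ Finset.range n, log (g (t i)) := by
  have hg : ∀ i ∈ Finset.range n, log (g (t i)) = log (3 / 2) := fun i hi => by
    rw [g, hc i (Finset.mem_range.1 hi)]
    norm_num
  rw [Finset.expect_congr rfl hg, Finset.expect_const (Finset.nonempty_range_iff.2 hn.ne')]
  exact log_lt_log (by positivity) (by nlinarith [sq_sqrt (show (0 : ℝ) ≤ 3 by norm_num)])

end CollatzExtension

open CollatzExtension in
theorem stmt_18 (x : ℝ) (n : ℕ) (hn : 0 < n) (M : ℝ) (hM : 1/3 < M)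
    (hmin : ∀ i < n, M ≤ |f^[i] x|) :
    |(1 / n : ℝ) * Real.log (f^[n] x / x) - Real.log ((2 + Real.sqrt 3) / 4)| <
      2 * Real.log 3 * Dstar x n - Real.log (1 - 1 / (3 * M)) := by
  have hmem : ∀ i ∈ Finset.range n, M ≤ |f^[i] x| := fun i hi => hmin i (Finset.mem_range.1 hi)
  have hA := abs_expect_log_g_sub_le x hn
  rw [log_iterate_div_eq_sum hn fun i hi => hM.trans_le (hmin i hi),
    one_div_mul_sum_range_eq_expect, Finset.expect_add_distrib]
  set A := 𝔼 i ∈ Finset.range n, log (g (f^[i] x))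
  set B := 𝔼 i ∈ Finset.range n, log (1 + h (f^[i] x) / f^[i] x)
  have hB_lt : B < -log (1 - 1 / (3 * M)) :=
    Finset.expect_lt (fun i hi => (log_one_add_h_div_lt hM (hmem i hi)).le)
      ⟨0, Finset.mem_range.2 hn, log_one_add_h_div_lt hM (hmin 0 hn)⟩
  have hB_ge : log (1 - 1 / (3 * M)) ≤ B := Finset.le_expect (Finset.nonempty_range_iff.2 hn.ne')
    fun i hi => log_one_sub_le_log_one_add_h_div hM (hmem i hi)
  have hlow : -(2 * log 3 * Dstar x n) + log (1 - 1 / (3 * M)) < A - log ((2 + √3) / 4) + B := by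
    by_cases hdeg : ∀ i < n, cos (π * f^[i] x) = -1
    · linarith [log_tau_lt_expect_log_g hn hdeg, abs_nonneg (A - log ((2 + √3) / 4))]
    · push Not at hdeg
      obtain ⟨j, hj, hcj⟩ := hdeg
      have hB_gt : log (1 - 1 / (3 * M)) < B :=
        Finset.lt_expect (fun i hi => log_one_sub_le_log_one_add_h_div hM (hmem i hi))
          ⟨j, Finset.mem_range.2 hj, log_one_sub_lt_log_one_add_h_div hM (hmin j hj) hcj⟩
      linarith [neg_abs_le (A - log ((2 + √3) / 4))]
  rw [abs_lt]
  constructor <;> linarith [le_abs_self (A - log ((2 + √3) / 4))]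
end
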